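/- Let T be a bounded linear operator on a complex Hilbert space H with N(T) ⊆ N(T*) (in particular this holds if R(T) ⊆ R(T*)). If 0 is not a limit point of the spectrum σ(T) and the restriction T' := T restricted to N(T)⊥ (a bounded operator on the Hilbert space N(T)⊥) is isoloid, then R(T) is closed. -/

import Mathlib

/-!
Let `K = N(T)`. Since `K ⊆ N(T*)`, for `k ∈ K` we get `⟪k, T x⟫ = ⟪T* k, x⟫ = 0`, so `T` maps
into `Kᗮ`; and if `λ ≠ 0` and `λ x - T x ∈ Kᗮ` then `x ∈ Kᗮ`. Hence `λ - T'` inherits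
invertibility from `λ - T`, i.e. `σ(T') \ {0} ⊆ σ(T)`, and `0` is not a limit point of `σ(T')`.
As `T'` is injective, `0` is not an eigenvalue of `T'`, so the isoloid `T'` has `0 ∉ σ(T')`.
Thus `T'` is onto `Kᗮ`, and `R(T) = Kᗮ` is closed.
-/

def Isoloid {E : Type*} [NormedAddCommGroup E] [NormedSpace ℂ E]
    (S : E →L[ℂ] E) : Prop :=
  ∀ z ∈ spectrum ℂ S, ¬ AccPt z (Filter.principal (spectrum ℂ S)) →
    ∃ x : E, x ≠ 0 ∧ S x = z • x

open ContinuousLinearMap Submodule Function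

lemma AccPt.mono_of_diff_singleton_subset {X : Type*} [TopologicalSpace X] {x : X}
    {s t : Set X} (h : AccPt x (Filter.principal s)) (hst : s \ {x} ⊆ t) :
    AccPt x (Filter.principal t) := by
  rw [accPt_principal_iff_nhdsWithin] at h ⊢
  exact h.mono (nhdsWithin_mono _ fun y hy ↦ ⟨hst hy, hy.2⟩)

lemma injective_of_coe_apply_eq {R M : Type*} [Ring R] [AddCommGroup M] [Module R M]
    {T : M →ₗ[R] M} {p : Submodule R M} (hp : Disjoint p (LinearMap.ker T)) (S : p → p)
    (hS : ∀ x, (S x : M) = T x) : Injective S := fun x y hxy ↦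
  LinearMap.injective_domRestrict_iff.mpr hp <|
    show T.domRestrict p x = T.domRestrict p y by
      simp only [LinearMap.domRestrict_apply, ← hS, hxy]

lemma Isoloid.zero_notMem_spectrum {E : Type*} [NormedAddCommGroup E] [NormedSpace ℂ E]
    {S : E →L[ℂ] E} (hS : Isoloid S) (hinj : Injective S)
    (h0 : ¬ AccPt (0 : ℂ) (Filter.principal (spectrum ℂ S))) : (0 : ℂ) ∉ spectrum ℂ S :=
  fun hmem ↦
    let ⟨_, hx0, hx⟩ := hS 0 hmem h0
    hx0 (hinj (by rw [hx, zero_smul, map_zero]))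

section Orthogonal

variable {𝕜 E : Type*} [RCLike 𝕜] [NormedAddCommGroup E] [InnerProductSpace 𝕜 E] [CompleteSpace E]
  {T : E →L[𝕜] E} {K : Submodule 𝕜 E}

lemma apply_mem_orthogonal_of_le_ker_adjoint (hK : K ≤ LinearMap.ker (adjoint T : E →ₗ[𝕜] E))
    (x : E) : T x ∈ Kᗮ := by
  intro k hk
  rw [← adjoint_inner_left, show adjoint T k = 0 from hK hk, inner_zero_left]

lemma mem_orthogonal_of_smul_sub_apply_mem (hK : K ≤ LinearMap.ker (adjoint T : E →ₗ[𝕜] E))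
    {c : 𝕜} (hc : c ≠ 0) {x : E} (hx : c • x - T x ∈ Kᗮ) : x ∈ Kᗮ := by
  have hcx : c • x ∈ Kᗮ := by
    simpa using K.orthogonal.add_mem hx (apply_mem_orthogonal_of_le_ker_adjoint hK x)
  exact (K.orthogonal.smul_mem_iff hc).mp hcx

lemma spectrum_diff_zero_subset_of_restrict (hK : K ≤ LinearMap.ker (adjoint T : E →ₗ[𝕜] E))
    (S : Kᗮ →L[𝕜] Kᗮ) (hS : ∀ x, (S x : E) = T x) : spectrum 𝕜 S \ {0} ⊆ spectrum 𝕜 T := by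
  rintro c ⟨hcS, hc⟩
  contrapose! hcS
  have hcoe : ∀ x, ((algebraMap 𝕜 _ c - S) x : E) = (algebraMap 𝕜 _ c - T) x := by
    intro x
    simp [Algebra.algebraMap_eq_smul_one, hS]
  obtain ⟨hinj, hsurj⟩ := isUnit_iff_bijective.mp (spectrum.notMem_iff.mp hcS)
  refine spectrum.notMem_iff.mpr (isUnit_iff_bijective.mpr ⟨fun x y hxy ↦ ?_, fun y ↦ ?_⟩)
  · exact Subtype.ext (hinj (by rw [← hcoe, ← hcoe, hxy]))
  · obtain ⟨x, hx⟩ := hsurj y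
    have hx' : c • x - T x = y := by simpa [Algebra.algebraMap_eq_smul_one] using hx
    have hxK : x ∈ Kᗮ := mem_orthogonal_of_smul_sub_apply_mem hK hc (hx' ▸ y.2)
    exact ⟨⟨x, hxK⟩, Subtype.ext (by rw [hcoe, hx])⟩

end Orthogonal

/-- Corollary 3.4: Let `T` be a bounded operator on a complex Hilbert space `H` with
`N(T) ⊆ N(T*)`.  If `0` is not a limit point of `σ(T)` and `T' = T|_{N(T)ᗮ}` is
isoloid, then `R(T)` is closed. -/
theorem stmt8 {H : Type*} [NormedAddCommGroup H] [InnerProductSpace ℂ H] [CompleteSpace H]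
    (T : H →L[ℂ] H)
    (hqp : LinearMap.ker (T : H →ₗ[ℂ] H) ≤ LinearMap.ker (ContinuousLinearMap.adjoint T : H →ₗ[ℂ] H))
    (hacc : ¬ AccPt (0 : ℂ) (Filter.principal (spectrum ℂ T)))
    (T' : (LinearMap.ker (T : H →ₗ[ℂ] H))ᗮ →L[ℂ] (LinearMap.ker (T : H →ₗ[ℂ] H))ᗮ)
    (hT' : ∀ x : (LinearMap.ker (T : H →ₗ[ℂ] H))ᗮ, (T' x : H) = T x)
    (hiso : Isoloid T') :
    IsClosed (Set.range T) := by
  have hinj : Injective T' :=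
    injective_of_coe_apply_eq (orthogonal_disjoint _).symm T' hT'
  have h0 : (0 : ℂ) ∉ spectrum ℂ T' := hiso.zero_notMem_spectrum hinj fun h ↦
    hacc (h.mono_of_diff_singleton_subset (spectrum_diff_zero_subset_of_restrict hqp T' hT'))
  have hsurj : Surjective T' := (isUnit_iff_bijective.mp ((spectrum.zero_notMem_iff ℂ).mp h0)).2
  have hrange : Set.range T = (LinearMap.ker (T : H →ₗ[ℂ] H))ᗮ := by
    refine (Set.range_subset_iff.mpr (apply_mem_orthogonal_of_le_ker_adjoint hqp)).antisymm
      fun y hy ↦ ?_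
    obtain ⟨x, hx⟩ := hsurj ⟨y, hy⟩
    exact ⟨x, by rw [← hT', hx]⟩
  rw [hrange]
  exact isClosed_orthogonal _
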